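/- If S is a polygraph, then the augmented directed complex λ(S*) is free, and its basis consists of the classes [x], where x varies among the generators of S; in particular, for each n ≥ 0, λ(S*)_n is the free abelian group ℤ^(S_n) on the set of n-generators and λ(S*)_n* is the submonoid ℕ^(S_n). -/

import Mathlib

/-! Formalization of notions from "Orientals as free algebras" (Ara–Lafont–Métayer),
following Burroni's expansion monad construction. Strict ω-categories are encoded
as a single set of cells with a dimension function, together with (total) source,
target, composition and unit operations, whose axioms are required to hold on the
appropriate domains of definition. -/

noncomputable section

namespace Orientals

open CategoryTheory

universe u v w

/-- The underlying data of a strict ω-category. `comp p x y` denotes the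
`p`-composition `x ∘_p y` ("x after y"), meaningful when `p < dim x = dim y`
and the iterated `p`-source of `x` equals the iterated `p`-target of `y`. -/
structure PreOmegaCat : Type (u + 1) where
  Cell : Type u
  dim : Cell → ℕ
  src : Cell → Cell
  tgt : Cell → Cell
  comp : ℕ → Cell → Cell → Cell
  unit : Cell → Cell

namespace PreOmegaCat

variable (C : PreOmegaCat.{u})

/-- Iterated source, down to dimension `p`. -/
def srcI (p : ℕ) (x : C.Cell) : C.Cell := C.src^[C.dim x - p] x

/-- Iterated target, down to dimension `p`. -/
def tgtI (p : ℕ) (x : C.Cell) : C.Cell := C.tgt^[C.dim x - p] x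

/-- `x ∘_p y` is defined when `p < dim x = dim y` and `s_p x = t_p y`. -/
abbrev Composable (p : ℕ) (x y : C.Cell) : Prop :=
  p < C.dim x ∧ C.dim y = C.dim x ∧ C.srcI p x = C.tgtI p y

/-- Pad a cell with iterated units up to dimension `m`. -/
def pad (m : ℕ) (x : C.Cell) : C.Cell := C.unit^[m - C.dim x] x

/-- Composition of two cells of possibly different dimensions, the lower
dimensional one being padded with units (the abbreviation `x ∘_q u` of the paper). -/
def mcomp (p : ℕ) (x y : C.Cell) : C.Cell :=
  C.comp p (C.pad (max (C.dim x) (C.dim y)) x) (C.pad (max (C.dim x) (C.dim y)) y)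

end PreOmegaCat

namespace PreOmegaCat

/-- `foldComp b s k = b ∘_0 s 0 ∘_1 s 1 ∘_2 ⋯ ∘_{k-1} s (k-1)`, parenthesized
with priority to the lowest dimensional compositions (i.e. left-nested). -/
def foldComp (C : PreOmegaCat.{u}) (b : C.Cell) (s : ℕ → C.Cell) : ℕ → C.Cell
  | 0 => b
  | k + 1 => C.mcomp k (foldComp C b s k) (s k)

end PreOmegaCat

/-- A strict ω-category: the data of a `PreOmegaCat` satisfying the globularity,
associativity, unit, interchange and functoriality-of-units laws on their domains
of definition. By convention, source and target fix the `0`-cells. -/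
structure OmegaCat extends PreOmegaCat.{u} : Type (u + 1) where
  dim_src : ∀ x, dim x ≠ 0 → dim (src x) = dim x - 1
  dim_tgt : ∀ x, dim x ≠ 0 → dim (tgt x) = dim x - 1
  src_dim0 : ∀ x, dim x = 0 → src x = x
  tgt_dim0 : ∀ x, dim x = 0 → tgt x = x
  glob_ss : ∀ x, 2 ≤ dim x → src (src x) = src (tgt x)
  glob_tt : ∀ x, 2 ≤ dim x → tgt (src x) = tgt (tgt x)
  dim_unit : ∀ x, dim (unit x) = dim x + 1
  src_unit : ∀ x, src (unit x) = x
  tgt_unit : ∀ x, tgt (unit x) = x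
  dim_comp : ∀ p x y, toPreOmegaCat.Composable p x y → dim (comp p x y) = dim x
  src_comp_top : ∀ p x y, toPreOmegaCat.Composable p x y → dim x = p + 1 →
    src (comp p x y) = src y
  tgt_comp_top : ∀ p x y, toPreOmegaCat.Composable p x y → dim x = p + 1 →
    tgt (comp p x y) = tgt x
  src_comp : ∀ p x y, toPreOmegaCat.Composable p x y → p + 1 < dim x →
    src (comp p x y) = comp p (src x) (src y)
  tgt_comp : ∀ p x y, toPreOmegaCat.Composable p x y → p + 1 < dim x →
    tgt (comp p x y) = comp p (tgt x) (tgt y)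
  comp_assoc : ∀ p x y z, toPreOmegaCat.Composable p x y →
    toPreOmegaCat.Composable p y z →
    comp p (comp p x y) z = comp p x (comp p y z)
  comp_unit_src : ∀ p x, p < dim x →
    comp p x (unit^[dim x - p] (toPreOmegaCat.srcI p x)) = x
  comp_unit_tgt : ∀ p x, p < dim x →
    comp p (unit^[dim x - p] (toPreOmegaCat.tgtI p x)) x = x
  interchange : ∀ p q x y x' y', q < p →
    toPreOmegaCat.Composable p x y → toPreOmegaCat.Composable p x' y' →
    toPreOmegaCat.Composable q x x' → toPreOmegaCat.Composable q y y' →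
    comp q (comp p x y) (comp p x' y') = comp p (comp q x x') (comp q y y')
  unit_comp : ∀ p x y, toPreOmegaCat.Composable p x y →
    unit (comp p x y) = comp p (unit x) (unit y)

/-- A (strict) ω-functor: a map of cells preserving dimension, sources, targets,
the defined compositions, and units. -/
@[ext]
structure OmegaFunctor (C D : OmegaCat.{u}) : Type u where
  map : C.Cell → D.Cell
  map_dim : ∀ x, D.dim (map x) = C.dim x
  map_src : ∀ x, map (C.src x) = D.src (map x)
  map_tgt : ∀ x, map (C.tgt x) = D.tgt (map x)
  map_comp : ∀ p x y, C.Composable p x y →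
    map (C.comp p x y) = D.comp p (map x) (map y)
  map_unit : ∀ x, map (C.unit x) = D.unit (map x)

namespace OmegaFunctor

/-- The identity ω-functor. -/
def idF (C : OmegaCat.{u}) : OmegaFunctor C C where
  map := _root_.id
  map_dim _ := rfl
  map_src _ := rfl
  map_tgt _ := rfl
  map_comp _ _ _ _ := rfl
  map_unit _ := rfl

theorem map_srcI {C D : OmegaCat.{u}} (f : OmegaFunctor C D) (p : ℕ) (x : C.Cell) :
    f.map (C.srcI p x) = D.srcI p (f.map x) := by
  show f.map (C.src^[C.dim x - p] x) = D.src^[D.dim (f.map x) - p] (f.map x)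
  rw [f.map_dim]
  exact Function.Semiconj.iterate_right f.map_src (C.dim x - p) x

theorem map_tgtI {C D : OmegaCat.{u}} (f : OmegaFunctor C D) (p : ℕ) (x : C.Cell) :
    f.map (C.tgtI p x) = D.tgtI p (f.map x) := by
  show f.map (C.tgt^[C.dim x - p] x) = D.tgt^[D.dim (f.map x) - p] (f.map x)
  rw [f.map_dim]
  exact Function.Semiconj.iterate_right f.map_tgt (C.dim x - p) x

theorem map_composable {C D : OmegaCat.{u}} (f : OmegaFunctor C D) {p : ℕ}
    {x y : C.Cell} (h : C.Composable p x y) : D.Composable p (f.map x) (f.map y) := by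
  obtain ⟨h1, h2, h3⟩ := h
  refine ⟨?_, ?_, ?_⟩
  · rw [f.map_dim]; exact h1
  · rw [f.map_dim, f.map_dim]; exact h2
  · rw [← f.map_srcI, ← f.map_tgtI, h3]

/-- Composition of ω-functors. -/
def compF {C D E : OmegaCat.{u}} (f : OmegaFunctor C D) (g : OmegaFunctor D E) :
    OmegaFunctor C E where
  map x := g.map (f.map x)
  map_dim x := by rw [g.map_dim, f.map_dim]
  map_src x := by rw [f.map_src, g.map_src]
  map_tgt x := by rw [f.map_tgt, g.map_tgt]
  map_comp p x y h := by
    rw [f.map_comp p x y h, g.map_comp p _ _ (f.map_composable h)]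
  map_unit x := by rw [f.map_unit, g.map_unit]

end OmegaFunctor

/-- The category `ωCat` of strict ω-categories and strict ω-functors. -/
instance : Category.{u, u + 1} OmegaCat.{u} where
  Hom := OmegaFunctor
  id := OmegaFunctor.idF
  comp := OmegaFunctor.compF
  id_comp f := by apply OmegaFunctor.ext; rfl
  comp_id f := by apply OmegaFunctor.ext; rfl
  assoc f g h := by apply OmegaFunctor.ext; rfl

/-- The underlying cell map of a morphism in `ωCat`. -/
def homMap {C D : OmegaCat.{u}} (f : C ⟶ D) : C.Cell → D.Cell := OmegaFunctor.map f

/-- The empty (initial) ω-category. -/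
def emptyOmega : OmegaCat.{u} where
  Cell := PEmpty
  dim x := x.elim
  src x := x.elim
  tgt x := x.elim
  comp _ x _ := x.elim
  unit x := x.elim
  dim_src x := x.elim
  dim_tgt x := x.elim
  src_dim0 x := x.elim
  tgt_dim0 x := x.elim
  glob_ss x := x.elim
  glob_tt x := x.elim
  dim_unit x := x.elim
  src_unit x := x.elim
  tgt_unit x := x.elim
  dim_comp _ x := x.elim
  src_comp_top _ x := x.elim
  tgt_comp_top _ x := x.elim
  src_comp _ x := x.elim
  tgt_comp _ x := x.elim
  comp_assoc _ x := x.elim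
  comp_unit_src _ x := x.elim
  comp_unit_tgt _ x := x.elim
  interchange _ _ x := x.elim
  unit_comp _ x := x.elim

/-- An "`n`-functor" from `C` to the `n`-truncation of `D`: a map of cells whose
structure-preservation properties are only required on cells of dimension `≤ n`
(the values on higher cells being irrelevant). -/
structure PartFunc (C D : OmegaCat.{u}) (n : ℕ) : Type u where
  map : C.Cell → D.Cell
  map_dim : ∀ x, C.dim x ≤ n → D.dim (map x) = C.dim x
  map_src : ∀ x, C.dim x ≤ n → map (C.src x) = D.src (map x)
  map_tgt : ∀ x, C.dim x ≤ n → map (C.tgt x) = D.tgt (map x)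
  map_comp : ∀ p x y, C.dim x ≤ n → C.Composable p x y →
    map (C.comp p x y) = D.comp p (map x) (map y)
  map_unit : ∀ x, C.dim x + 1 ≤ n → map (C.unit x) = D.unit (map x)

/-- `C` is freely generated, in the sense of polygraphs, by the graded set of
cells `gen`: the generators of dimension `n` are exactly `gen n`, the `0`-cells
are exactly the `0`-generators, and for each `n` the universal property of free
extension holds: any `n`-functor to (the `n`-truncation of) an ω-category `D`
together with a compatible assignment of the `(n+1)`-generators extends,
uniquely on cells of dimension `≤ n + 1`, to an `(n+1)`-functor. -/
def FreelyGeneratedBy (C : OmegaCat.{u}) (gen : ℕ → Set C.Cell) : Prop :=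
  (∀ n x, x ∈ gen n → C.dim x = n) ∧
  (∀ x, C.dim x = 0 → x ∈ gen 0) ∧
  ∀ (n : ℕ) (D : OmegaCat.{u}) (f : PartFunc C D n) (e : C.Cell → D.Cell),
    (∀ a ∈ gen (n + 1), D.dim (e a) = n + 1 ∧
        D.src (e a) = f.map (C.src a) ∧ D.tgt (e a) = f.map (C.tgt a)) →
    (∃ g : PartFunc C D (n + 1),
        (∀ x, C.dim x ≤ n → g.map x = f.map x) ∧ ∀ a ∈ gen (n + 1), g.map a = e a) ∧
    (∀ g g' : PartFunc C D (n + 1),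
        ((∀ x, C.dim x ≤ n → g.map x = f.map x) ∧ ∀ a ∈ gen (n + 1), g.map a = e a) →
        ((∀ x, C.dim x ≤ n → g'.map x = f.map x) ∧ ∀ a ∈ gen (n + 1), g'.map a = e a) →
        ∀ x, C.dim x ≤ n + 1 → g.map x = g'.map x)

/-- An ω-category is an `n`-category when all its cells of dimension `> n`
are units. -/
def IsNCat (C : OmegaCat.{u}) (n : ℕ) : Prop :=
  ∀ x, n < C.dim x → ∃ y, x = C.unit y

/-- The subgroup of relations defining the `m`-th linearization `λ(C)_m`:
it identifies `[x ∘_p y]` with `[x] + [y]` for composable pairs of `m`-cells,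
and kills the classes of cells of dimension `≠ m` (so that the quotient is
exactly the abelian group of `m`-chains of `C`). -/
def lamRel (C : OmegaCat.{u}) (m : ℕ) : AddSubgroup (C.Cell →₀ ℤ) :=
  AddSubgroup.closure
    ({z | ∃ p x y, C.Composable p x y ∧ C.dim x = m ∧
        z = Finsupp.single (C.comp p x y) 1 - Finsupp.single x 1 - Finsupp.single y 1} ∪
      {z | ∃ x, C.dim x ≠ m ∧ z = Finsupp.single x 1})

/-- The degree `m` part `λ(C)_m` of the linearization of an ω-category:
the free abelian group on the `m`-cells of `C` modulo the relations
`[x ∘_p y] = [x] + [y]`. -/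
def lam (C : OmegaCat.{u}) (m : ℕ) : Type u := (C.Cell →₀ ℤ) ⧸ lamRel C m

instance (C : OmegaCat.{u}) (m : ℕ) : AddCommGroup (lam C m) :=
  inferInstanceAs (AddCommGroup ((C.Cell →₀ ℤ) ⧸ lamRel C m))

/-- The canonical projection onto `λ(C)_m`. -/
def lamMk (C : OmegaCat.{u}) (m : ℕ) : (C.Cell →₀ ℤ) →+ lam C m :=
  QuotientAddGroup.mk' _

/-- The class `[x] ∈ λ(C)_m` of a cell of `C`. -/
def lamCls (C : OmegaCat.{u}) (m : ℕ) (x : C.Cell) : lam C m :=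
  lamMk C m (Finsupp.single x 1)

/-- The submonoid `λ(C)_m^*` of `λ(C)_m` generated by the classes of the
`m`-cells. -/
def lamPos (C : OmegaCat.{u}) (m : ℕ) : AddSubmonoid (lam C m) :=
  AddSubmonoid.closure {z | ∃ x, C.dim x = m ∧ z = lamCls C m x}

/-- `φ` is a system of coordinates for `λ(C)_m` with respect to the generators
`gen m` : an isomorphism of abelian groups sending the canonical basis to the
classes of the generators. (When `C` is free on the polygraph `gen`, such a `φ`
exists and is unique.) -/
def IsCoord (C : OmegaCat.{u}) (gen : ℕ → Set C.Cell) (m : ℕ)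
    (φ : ({a : C.Cell // a ∈ gen m} →₀ ℤ) ≃+ lam C m) : Prop :=
  ∀ a : {a : C.Cell // a ∈ gen m}, φ (Finsupp.single a 1) = lamCls C m a.1

/-- The generator `b` belongs to the support of `z ∈ λ(C)_m` (with respect to
the basis given by the generators). -/
def InSuppG (C : OmegaCat.{u}) (gen : ℕ → Set C.Cell) (m : ℕ)
    (z : lam C m) (b : C.Cell) : Prop :=
  ∀ φ, IsCoord C gen m φ → ∃ hb : b ∈ gen m, (φ.symm z) ⟨b, hb⟩ ≠ 0

/-- `z, w ∈ λ(C)_m` have disjoint supports with respect to the basis given by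
the generators. -/
def DisjSupp (C : OmegaCat.{u}) (gen : ℕ → Set C.Cell) (m : ℕ)
    (z w : lam C m) : Prop :=
  ∀ φ, IsCoord C gen m φ → Disjoint (φ.symm z).support (φ.symm w).support

/-- The polygraph `gen` is atomic: for every generator `x` of dimension `n` and
every `i < n`, the supports of `[s_i x]` and `[t_i x]` are disjoint. -/
def AtomicGen (C : OmegaCat.{u}) (gen : ℕ → Set C.Cell) : Prop :=
  ∀ n, ∀ x ∈ gen n, ∀ i, i < n →
    DisjSupp C gen i (lamCls C i (C.srcI i x)) (lamCls C i (C.tgtI i x))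

/-- `x` is a generator (of some dimension). -/
def IsGen (C : OmegaCat.{u}) (gen : ℕ → Set C.Cell) (x : C.Cell) : Prop :=
  ∃ n, x ∈ gen n

/-- The polygraph `gen` is strongly loop-free: there is a partial order on its
generators such that `x ≤ y` whenever `y` belongs to the support of `[t x]`
or `x` belongs to the support of `[s y]`. -/
def SLFGen (C : OmegaCat.{u}) (gen : ℕ → Set C.Cell) : Prop :=
  ∃ le : C.Cell → C.Cell → Prop,
    (∀ x, IsGen C gen x → le x x) ∧
    (∀ x y z, IsGen C gen x → IsGen C gen y → IsGen C gen z →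
      le x y → le y z → le x z) ∧
    (∀ x y, IsGen C gen x → IsGen C gen y → le x y → le y x → x = y) ∧
    (∀ m n x y, x ∈ gen m → y ∈ gen n →
      ((1 ≤ m ∧ InSuppG C gen (m - 1) (lamCls C (m - 1) (C.tgt x)) y) ∨
       (1 ≤ n ∧ InSuppG C gen (n - 1) (lamCls C (n - 1) (C.src y)) x)) → le x y)

/-- A strong Steiner polygraph: atomic and strongly loop-free. -/
def IsFreeOnStrongSteinerPolygraph (C : OmegaCat.{u}) : Prop :=
  ∃ gen, FreelyGeneratedBy C gen ∧ AtomicGen C gen ∧ SLFGen C gen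

/-!
Additive maps `λ(C)_n → M` are the same as `n`-functors from `C` to the Eilenberg–MacLane
ω-category `K(M, n)` (trivial below dimension `n`, the monoid `M` in dimension `n`, units
above). When `C = S*`, freeness provides the `n`-functor into `K(ℕ^(S_n), n)` sending each
`n`-generator `a` to the basis vector `e_a` (its values on lower generators are forced): it
counts the `n`-generators occurring in each `n`-cell, which gives coordinates
`λ(C)_n → ℤ^(S_n)`, nonnegative on `λ(C)_n^*`. Uniqueness of extensions, applied against the
tautological `n`-functor `x ↦ [x]`, shows that `[x]` is the sum of the generators counted in
`x`, so these coordinates invert `e_a ↦ [a]`.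
-/

lemma OmegaCat.dim_src_eq_sub_one (C : OmegaCat.{u}) (x : C.Cell) :
    C.dim (C.src x) = C.dim x - 1 := by
  by_cases h0 : C.dim x = 0
  · rw [C.src_dim0 x h0, h0]
  · exact C.dim_src x h0

lemma OmegaCat.dim_tgt_eq_sub_one (C : OmegaCat.{u}) (x : C.Cell) :
    C.dim (C.tgt x) = C.dim x - 1 := by
  by_cases h0 : C.dim x = 0
  · rw [C.tgt_dim0 x h0, h0]
  · exact C.dim_tgt x h0

lemma lamCls_eq_zero {C : OmegaCat.{u}} {m : ℕ} {x : C.Cell} (hx : C.dim x ≠ m) :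
    lamCls C m x = 0 :=
  (QuotientAddGroup.eq_zero_iff _).2 (AddSubgroup.subset_closure (Or.inr ⟨x, hx, rfl⟩))

lemma lamCls_comp {C : OmegaCat.{u}} {m p : ℕ} {x y : C.Cell} (hc : C.Composable p x y)
    (hx : C.dim x = m) : lamCls C m (C.comp p x y) = lamCls C m x + lamCls C m y := by
  have hrel : lamMk C m (Finsupp.single (C.comp p x y) 1 - Finsupp.single x 1
      - Finsupp.single y 1) = 0 :=
    (QuotientAddGroup.eq_zero_iff _).2
      (AddSubgroup.subset_closure (Or.inl ⟨p, x, y, hc, hx, rfl⟩))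
  rwa [map_sub, map_sub, sub_sub, sub_eq_zero] at hrel

lemma lamCls_unit {C : OmegaCat.{u}} (x : C.Cell) : lamCls C (C.dim x + 1) (C.unit x) = 0 := by
  set d := C.dim x
  have hdu : C.dim (C.unit x) = d + 1 := C.dim_unit x
  have hsrc : C.srcI d (C.unit x) = x := by
    simp only [PreOmegaCat.srcI, hdu, Nat.add_sub_cancel_left, Function.iterate_one, C.src_unit]
  have htgt : C.tgtI d (C.unit x) = x := by
    simp only [PreOmegaCat.tgtI, hdu, Nat.add_sub_cancel_left, Function.iterate_one, C.tgt_unit]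
  -- `1_x ∘_d 1_x = 1_x`, so `[1_x] = [1_x] + [1_x]`.
  have hidem : C.comp d (C.unit x) (C.unit x) = C.unit x := by
    simpa only [hdu, hsrc, Nat.add_sub_cancel_left, Function.iterate_one] using
      C.comp_unit_src d (C.unit x) (by omega)
  have h := lamCls_comp (m := d + 1) ⟨by omega, rfl, hsrc.trans htgt.symm⟩ hdu
  rw [hidem] at h
  exact left_eq_add.1 h

lemma lamCls_mem_lamPos {C : OmegaCat.{u}} {m : ℕ} {x : C.Cell} (hx : C.dim x = m) :
    lamCls C m x ∈ lamPos C m :=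
  AddSubmonoid.subset_closure ⟨x, hx, rfl⟩

theorem lam_hom_ext {C : OmegaCat.{u}} {m : ℕ} {G : Type*} [AddMonoid G] {f g : lam C m →+ G}
    (h : ∀ x, C.dim x = m → f (lamCls C m x) = g (lamCls C m x)) : f = g := by
  refine QuotientAddGroup.addMonoidHom_ext _ (Finsupp.addHom_ext' fun x => AddMonoidHom.ext_int ?_)
  show f (lamCls C m x) = g (lamCls C m x)
  by_cases hx : C.dim x = m
  · exact h x hx
  · rw [lamCls_eq_zero hx, map_zero, map_zero]

section LamDesc

variable {C : OmegaCat.{u}} {m : ℕ} {G : Type*} [AddCommGroup G] (v : C.Cell → G)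
  (hv_comp : ∀ p x y, C.Composable p x y → C.dim x = m → v (C.comp p x y) = v x + v y)
  (hv_dim : ∀ x, C.dim x ≠ m → v x = 0)
include hv_comp hv_dim

lemma lamRel_le_ker_liftAddHom :
    lamRel C m ≤ (Finsupp.liftAddHom fun x => zmultiplesHom G (v x)).ker := by
  refine (AddSubgroup.closure_le _).2 ?_
  rintro z (⟨p, x, y, hc, hx, rfl⟩ | ⟨x, hx, rfl⟩) <;>
    simp only [SetLike.mem_coe, AddMonoidHom.mem_ker, map_sub, Finsupp.liftAddHom_apply_single,
      zmultiplesHom_apply, one_zsmul]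
  · rw [hv_comp p x y hc hx]; abel
  · exact hv_dim x hx

def lamDesc : lam C m →+ G :=
  QuotientAddGroup.lift (lamRel C m) _ (lamRel_le_ker_liftAddHom v hv_comp hv_dim)

@[simp]
lemma lamDesc_lamCls (x : C.Cell) : lamDesc v hv_comp hv_dim (lamCls C m x) = v x := by
  show QuotientAddGroup.lift (lamRel C m) _ (lamRel_le_ker_liftAddHom v hv_comp hv_dim)
    (QuotientAddGroup.mk' _ (Finsupp.single x 1)) = v x
  rw [QuotientAddGroup.mk'_apply, QuotientAddGroup.lift_mk', Finsupp.liftAddHom_apply_single,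
    zmultiplesHom_apply, one_zsmul]

end LamDesc

/-- A cell of `K(M, n)`. One of dimension `k > n` stands for the iterated unit of the `n`-cell
with the same label. -/
@[ext]
structure EMCell (M : Type u) [AddCommMonoid M] (n : ℕ) : Type u where
  dim : ℕ
  lab : M
  lab_eq_zero : dim < n → lab = 0

namespace EMCell

variable {M : Type u} [AddCommMonoid M] {n : ℕ}

def mk' (k : ℕ) (m : M) : EMCell M n :=
  ⟨k, if k < n then 0 else m, fun h => if_pos h⟩

@[simp] lemma dim_mk' (k : ℕ) (m : M) : (mk' k m : EMCell M n).dim = k := rfl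

@[simp] lemma lab_mk' (k : ℕ) (m : M) :
    (mk' k m : EMCell M n).lab = if k < n then 0 else m := rfl

lemma eq_of_dim_lt {x y : EMCell M n} (h : x.dim = y.dim) (hx : x.dim < n) : x = y :=
  EMCell.ext h (by rw [x.lab_eq_zero hx, y.lab_eq_zero (h ▸ hx)])

lemma ext_of_le {x y : EMCell M n} (h : x.dim = y.dim) (hlab : n ≤ x.dim → x.lab = y.lab) :
    x = y := by
  by_cases hx : x.dim < n
  · exact eq_of_dim_lt h hx
  · exact EMCell.ext h (hlab (by omega))

lemma lab_mk'_of_dim_le (x : EMCell M n) {k : ℕ} (hk : x.dim ≤ k) :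
    (mk' k x.lab : EMCell M n).lab = x.lab := by
  rw [lab_mk', ite_eq_right_iff]
  exact fun h => (x.lab_eq_zero (by omega)).symm

lemma mk'_dim_lab (x : EMCell M n) : mk' x.dim x.lab = x :=
  EMCell.ext rfl (x.lab_mk'_of_dim_le le_rfl)

def src (x : EMCell M n) : EMCell M n := mk' (x.dim - 1) x.lab

def comp (p : ℕ) (x y : EMCell M n) : EMCell M n :=
  mk' x.dim (if p < n then x.lab + y.lab else x.lab)

def unit (x : EMCell M n) : EMCell M n := mk' (x.dim + 1) x.lab

@[simp] lemma dim_src (x : EMCell M n) : (src x).dim = x.dim - 1 := rfl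

@[simp] lemma dim_comp (p : ℕ) (x y : EMCell M n) : (comp p x y).dim = x.dim := rfl

@[simp] lemma dim_unit (x : EMCell M n) : (unit x).dim = x.dim + 1 := rfl

@[simp] lemma lab_src (x : EMCell M n) : (src x).lab = if x.dim - 1 < n then 0 else x.lab := rfl

@[simp] lemma lab_comp (p : ℕ) (x y : EMCell M n) :
    (comp p x y).lab = if x.dim < n then 0 else if p < n then x.lab + y.lab else x.lab := rfl

@[simp] lemma lab_unit (x : EMCell M n) : (unit x).lab = x.lab :=
  x.lab_mk'_of_dim_le (Nat.le_succ _)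

lemma src_iterate (x : EMCell M n) (j : ℕ) : src^[j] x = mk' (x.dim - j) x.lab := by
  induction j with
  | zero => exact x.mk'_dim_lab.symm
  | succ j ih =>
    rw [Function.iterate_succ_apply', ih]
    refine ext_of_le (by simp [src]; omega) fun h => ?_
    simp only [src, dim_mk', lab_mk'] at h ⊢
    grind

lemma unit_iterate (x : EMCell M n) (j : ℕ) : unit^[j] x = mk' (x.dim + j) x.lab := by
  induction j with
  | zero => exact x.mk'_dim_lab.symm
  | succ j ih =>
    rw [Function.iterate_succ_apply', ih, unit, dim_mk', lab_mk'_of_dim_le _ (by omega)]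
    rfl

lemma lab_eq_of_src_iterate_eq {p : ℕ} {x y : EMCell M n} (hn : n ≤ p) (hx : p ≤ x.dim)
    (hy : p ≤ y.dim) (h : src^[x.dim - p] x = src^[y.dim - p] y) : x.lab = y.lab := by
  simpa [src_iterate, Nat.sub_sub_self hx, Nat.sub_sub_self hy, Nat.not_lt.2 hn] using
    congrArg lab h

variable {p : ℕ} {x y : EMCell M n}

lemma src_unit (x : EMCell M n) : src (unit x) = x := by
  rw [src, unit, dim_mk', lab_mk'_of_dim_le _ (by omega), Nat.add_sub_cancel, mk'_dim_lab]

lemma src_comp_eq_src_right (hyx : y.dim = x.dim) (hd : x.dim = p + 1)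
    (hl : n ≤ p → x.lab = y.lab) : src (comp p x y) = src y := by
  refine ext_of_le (by simp [hyx]) fun h => ?_
  simp only [dim_src, dim_comp, lab_src, lab_comp, hyx] at h ⊢
  grind

lemma src_comp_eq_src_left (hd : x.dim = p + 1) : src (comp p x y) = src x := by
  refine ext_of_le rfl fun h => ?_
  simp only [dim_src, dim_comp, lab_src, lab_comp] at h ⊢
  grind

lemma src_comp (hyx : y.dim = x.dim) : src (comp p x y) = comp p (src x) (src y) := by
  refine ext_of_le rfl fun h => ?_
  simp only [dim_src, dim_comp, lab_src, lab_comp, hyx] at h ⊢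
  grind

lemma comp_assoc (hyx : y.dim = x.dim) (z : EMCell M n) :
    comp p (comp p x y) z = comp p x (comp p y z) := by
  refine ext_of_le rfl fun h => ?_
  simp only [dim_comp, lab_comp, hyx] at h ⊢
  grind

lemma comp_unit_iterate_src_iterate (hp : p < x.dim) :
    comp p x (unit^[x.dim - p] (src^[x.dim - p] x)) = x := by
  refine ext_of_le rfl fun h => ?_
  simp only [dim_comp, lab_comp, src_iterate, unit_iterate, lab_mk', dim_mk'] at h ⊢
  grind

lemma unit_iterate_src_iterate_comp (hp : p < x.dim) :
    comp p (unit^[x.dim - p] (src^[x.dim - p] x)) x = x := by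
  refine ext_of_le (by simp [src_iterate, unit_iterate]) fun h => ?_
  simp only [dim_comp, lab_comp, src_iterate, unit_iterate, lab_mk', dim_mk'] at h ⊢
  grind

lemma comp_comp_comp_comm {q : ℕ} (hyx : y.dim = x.dim) {x' y' : EMCell M n}
    (hx'x : x'.dim = x.dim) :
    comp q (comp p x y) (comp p x' y') = comp p (comp q x x') (comp q y y') := by
  refine ext_of_le rfl fun h => ?_
  simp only [dim_comp, lab_comp, hyx, hx'x] at h ⊢
  grind

lemma unit_comp (hyx : y.dim = x.dim) : unit (comp p x y) = comp p (unit x) (unit y) := by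
  refine ext_of_le rfl fun h => ?_
  simp only [dim_unit, dim_comp, lab_unit, lab_comp] at h ⊢
  grind [x.lab_eq_zero, y.lab_eq_zero]

end EMCell

open EMCell in
abbrev EMCat (M : Type u) [AddCommMonoid M] (n : ℕ) : OmegaCat.{u} where
  Cell := EMCell M n
  dim := EMCell.dim
  src := EMCell.src
  tgt := EMCell.src -- every cell of positive dimension is a loop
  comp := EMCell.comp
  unit := EMCell.unit
  dim_src _ _ := rfl
  dim_tgt _ _ := rfl
  src_dim0 x h := by rw [src, h, Nat.zero_sub, ← h, mk'_dim_lab]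
  tgt_dim0 x h := by rw [src, h, Nat.zero_sub, ← h, mk'_dim_lab]
  glob_ss _ _ := rfl
  glob_tt _ _ := rfl
  dim_unit _ := rfl
  src_unit := src_unit
  tgt_unit := src_unit
  dim_comp _ _ _ _ := rfl
  src_comp_top _ _ _ hc hd := src_comp_eq_src_right hc.2.1 hd fun hn =>
    lab_eq_of_src_iterate_eq hn hc.1.le (hc.1.le.trans_eq hc.2.1.symm) hc.2.2
  tgt_comp_top _ _ _ _ hd := src_comp_eq_src_left hd
  src_comp _ _ _ hc _ := src_comp hc.2.1
  tgt_comp _ _ _ hc _ := src_comp hc.2.1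
  comp_assoc _ _ _ z hc _ := comp_assoc hc.2.1 z
  comp_unit_src _ _ hp := comp_unit_iterate_src_iterate hp
  comp_unit_tgt _ _ hp := unit_iterate_src_iterate_comp hp
  interchange _ _ _ _ _ _ _ hc _ hc' _ := comp_comp_comp_comm hc.2.1 hc'.2.1
  unit_comp _ _ _ hc := unit_comp hc.2.1

namespace EMCell

variable {M M' : Type u} [AddCommMonoid M] [AddCommMonoid M'] {n : ℕ}

def map (h : M →+ M') (x : EMCell M n) : EMCell M' n :=
  ⟨x.dim, h x.lab, fun hx => by rw [x.lab_eq_zero hx, map_zero]⟩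

lemma map_mk' (h : M →+ M') (k : ℕ) (m : M) : (mk' k m : EMCell M n).map h = mk' k (h m) := by
  ext <;> simp [map, apply_ite h]

lemma map_comp (h : M →+ M') (p : ℕ) (x y : EMCell M n) :
    (comp p x y).map h = comp p (x.map h) (y.map h) := by
  simp only [comp, map_mk', apply_ite h, map_add]
  rfl

end EMCell

def PartFunc.relabel {C : OmegaCat.{u}} {M M' : Type u} [AddCommMonoid M] [AddCommMonoid M']
    {n m : ℕ} (h : M →+ M') (f : PartFunc C (EMCat M n) m) : PartFunc C (EMCat M' n) m where
  map x := (f.map x).map h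
  map_dim x hx := f.map_dim x hx
  map_src x hx := by rw [f.map_src x hx]; exact EMCell.map_mk' h _ _
  map_tgt x hx := by rw [f.map_tgt x hx]; exact EMCell.map_mk' h _ _
  map_comp p x y hx hc := by rw [f.map_comp p x y hx hc]; exact EMCell.map_comp h _ _ _
  map_unit x hx := by rw [f.map_unit x hx]; exact EMCell.map_mk' h _ _

def PartFunc.restrict {C D : OmegaCat.{u}} {m : ℕ} (f : PartFunc C D m) {k : ℕ} (hk : k ≤ m) :
    PartFunc C D k where
  map := f.map
  map_dim x hx := f.map_dim x (hx.trans hk)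
  map_src x hx := f.map_src x (hx.trans hk)
  map_tgt x hx := f.map_tgt x (hx.trans hk)
  map_comp p x y hx hc := f.map_comp p x y (hx.trans hk) hc
  map_unit x hx := f.map_unit x (hx.trans hk)

def PartFunc.ofDimZero {C D : OmegaCat.{u}} (φ : C.Cell → D.Cell)
    (hφ : ∀ x, D.dim (φ x) = 0) :
    PartFunc C D 0 where
  map := φ
  map_dim x hx := (hφ x).trans (Nat.le_zero.1 hx).symm
  map_src x hx := by rw [C.src_dim0 x (Nat.le_zero.1 hx), D.src_dim0 _ (hφ x)]
  map_tgt x hx := by rw [C.tgt_dim0 x (Nat.le_zero.1 hx), D.tgt_dim0 _ (hφ x)]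
  map_comp _ _ _ hx hc := absurd hc.1 (by omega)
  map_unit _ hx := absurd hx (by omega)

lemma PartFunc.lab_map_comp {C : OmegaCat.{u}} {M : Type u} [AddCommMonoid M] {n : ℕ}
    (f : PartFunc C (EMCat M n) n) {p : ℕ} {x y : C.Cell} (hc : C.Composable p x y)
    (hx : C.dim x = n) : (f.map (C.comp p x y)).lab = (f.map x).lab + (f.map y).lab := by
  have hd : (f.map x).dim = n := (f.map_dim x hx.le).trans hx
  have hp : p < n := hx ▸ hc.1
  rw [f.map_comp p x y hx.le hc, EMCell.lab_comp, if_neg (by omega), if_pos hp]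

def lamFunctor (C : OmegaCat.{u}) (n : ℕ) : PartFunc C (EMCat (lam C n) n) n where
  map x := ⟨C.dim x, lamCls C n x, fun h => lamCls_eq_zero (by omega)⟩
  map_dim _ _ := rfl
  map_src x hx := by
    refine EMCell.ext_of_le (C.dim_src_eq_sub_one x) fun h => ?_
    dsimp only at h ⊢
    rw [C.dim_src_eq_sub_one] at h
    rw [C.src_dim0 x (by omega), EMCell.lab_src, if_neg (by omega)]
  map_tgt x hx := by
    refine EMCell.ext_of_le (C.dim_tgt_eq_sub_one x) fun h => ?_
    dsimp only at h ⊢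
    rw [C.dim_tgt_eq_sub_one] at h
    rw [C.tgt_dim0 x (by omega), EMCell.lab_src, if_neg (by omega)]
  map_comp p x y hx hc := by
    refine EMCell.ext_of_le (C.dim_comp p x y hc) fun h => ?_
    dsimp only at h ⊢
    have hxn : C.dim x = n := by have := C.dim_comp p x y hc; omega
    have hp : p < n := hxn ▸ hc.1
    rw [EMCell.lab_comp, if_neg (by dsimp only; omega), if_pos hp]
    exact lamCls_comp hc hxn
  map_unit x hx := by
    refine EMCell.ext_of_le (C.dim_unit x) fun h => ?_
    dsimp only at h
    have hxn : C.dim x + 1 = n := by have := C.dim_unit x; omega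
    rw [EMCell.lab_unit]
    show lamCls C n (C.unit x) = lamCls C n x
    rw [lamCls_eq_zero (by omega : C.dim x ≠ n), ← hxn, lamCls_unit]

namespace FreelyGeneratedBy

variable {C : OmegaCat.{u}} {gen : ℕ → Set C.Cell} (hC : FreelyGeneratedBy C gen)
include hC

theorem partFunc_ext {D : OmegaCat.{u}} {m : ℕ} (f g : PartFunc C D m)
    (h : ∀ k ≤ m, ∀ a ∈ gen k, f.map a = g.map a) (x : C.Cell) (hx : C.dim x ≤ m) :
    f.map x = g.map x := by
  suffices ∀ k ≤ m, ∀ x, C.dim x ≤ k → f.map x = g.map x from this m le_rfl x hx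
  intro k
  induction k with
  | zero => exact fun _ x hx => h 0 (Nat.zero_le _) x (hC.2.1 x (by omega))
  | succ k ih =>
    intro hk
    obtain ⟨-, huniq⟩ := hC.2.2 k D (f.restrict (by omega)) f.map fun a ha => by
      have hda := hC.1 _ a ha
      exact ⟨(f.map_dim a (by omega)).trans hda, (f.map_src a (by omega)).symm,
        (f.map_tgt a (by omega)).symm⟩
    exact huniq (f.restrict hk) (g.restrict hk) ⟨fun _ _ => rfl, fun _ _ => rfl⟩
      ⟨fun y hy => (ih (by omega) y hy).symm, fun a ha => (h _ hk a ha).symm⟩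

theorem exists_partFunc_emCat {M : Type u} [AddCommMonoid M] {n : ℕ} (v : C.Cell → M) :
    ∀ k ≤ n, ∃ f : PartFunc C (EMCat M n) k,
      ∀ a ∈ gen k, f.map a = EMCell.mk' k (v a) := by
  intro k
  induction k with
  | zero => exact fun _ => ⟨PartFunc.ofDimZero (fun x => EMCell.mk' 0 (v x)) fun _ => rfl,
      fun _ _ => rfl⟩
  | succ k ih =>
    intro hk
    obtain ⟨f, -⟩ := ih (by omega)
    -- Below dimension `n` a cell of `K(M, n)` is determined by its dimension, so any
    -- values on the `(k+1)`-generators have the right boundaries.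
    have hbdry : ∀ a b, C.dim b = k →
        (EMCat M n).src (EMCell.mk' (k + 1) (v a)) = f.map b :=
      fun a b hb => EMCell.eq_of_dim_lt ((f.map_dim b hb.le).trans hb).symm
        (show k + 1 - 1 < n by omega)
    obtain ⟨⟨g, -, hg⟩, -⟩ := hC.2.2 k (EMCat M n) f (fun a => EMCell.mk' (k + 1) (v a))
      fun a ha => ⟨rfl, hbdry a _ (by rw [C.dim_src_eq_sub_one, hC.1 _ a ha]; rfl),
        hbdry a _ (by rw [C.dim_tgt_eq_sub_one, hC.1 _ a ha]; rfl)⟩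
    exact ⟨g, hg⟩

end FreelyGeneratedBy

def finsuppNatCast (α : Type u) : (α →₀ ℕ) →+ (α →₀ ℤ) :=
  Finsupp.mapRange.addMonoidHom (Nat.castAddMonoidHom ℤ)

@[simp] lemma finsuppNatCast_apply {α : Type u} (z : α →₀ ℕ) (a : α) :
    finsuppNatCast α z a = z a := rfl

@[simp] lemma finsuppNatCast_single {α : Type u} (a : α) (k : ℕ) :
    finsuppNatCast α (Finsupp.single a k) = Finsupp.single a (k : ℤ) :=
  Finsupp.mapRange_single (hf := map_zero _)

theorem FreelyGeneratedBy.exists_counting {C : OmegaCat.{u}} {gen : ℕ → Set C.Cell}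
    (hC : FreelyGeneratedBy C gen) (n : ℕ) :
    ∃ f : PartFunc C (EMCat ({a // a ∈ gen n} →₀ ℕ) n) n,
      ∀ a (ha : a ∈ gen n), (f.map a).lab = Finsupp.single ⟨a, ha⟩ 1 := by
  classical
  obtain ⟨f, hf⟩ := hC.exists_partFunc_emCat
    (fun a => if ha : a ∈ gen n then Finsupp.single (⟨a, ha⟩ : {a // a ∈ gen n}) 1 else 0)
    n le_rfl
  exact ⟨f, fun a ha => by rw [hf a ha, EMCell.lab_mk', if_neg (lt_irrefl n), dif_pos ha]⟩

section Coordinates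

variable {C : OmegaCat.{u}} {gen : ℕ → Set C.Cell} {n : ℕ}

variable (C gen n) in
def genSum : ({a // a ∈ gen n} →₀ ℤ) →+ lam C n :=
  (Finsupp.linearCombination ℤ fun a => lamCls C n a.1).toAddMonoidHom

lemma genSum_single (a : {a // a ∈ gen n}) (k : ℤ) :
    genSum C gen n (Finsupp.single a k) = k • lamCls C n a.1 :=
  Finsupp.linearCombination_single ℤ k a

lemma genSum_mem_lamPos (hC : FreelyGeneratedBy C gen) {z : {a // a ∈ gen n} →₀ ℤ}
    (hz : ∀ a, 0 ≤ z a) : genSum C gen n z ∈ lamPos C n := by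
  rw [genSum, LinearMap.toAddMonoidHom_coe, Finsupp.linearCombination_apply]
  refine AddSubmonoidClass.finsuppSum_mem _ _ _ fun a _ => ?_
  rw [← Int.toNat_of_nonneg (hz a), natCast_zsmul]
  exact AddSubmonoid.nsmul_mem _ (lamCls_mem_lamPos (hC.1 n a.1 a.2)) _

variable (count : PartFunc C (EMCat ({a // a ∈ gen n} →₀ ℕ) n) n)

def coordHom : lam C n →+ ({a // a ∈ gen n} →₀ ℤ) :=
  lamDesc (fun x => if C.dim x = n then finsuppNatCast _ (count.map x).lab else 0)
    (fun p x y hc hx => by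
      rw [if_pos (C.dim_comp p x y hc ▸ hx), if_pos hx, if_pos (hc.2.1.trans hx),
        count.lab_map_comp hc hx, map_add])
    (fun _ hx => if_neg hx)

lemma coordHom_lamCls {x : C.Cell} (hx : C.dim x = n) :
    coordHom count (lamCls C n x) = finsuppNatCast _ (count.map x).lab := by
  rw [coordHom, lamDesc_lamCls, if_pos hx]

lemma coordHom_nonneg {w : lam C n} (hw : w ∈ lamPos C n) (a : {a // a ∈ gen n}) :
    0 ≤ coordHom count w a := by
  induction hw using AddSubmonoid.closure_induction with
  | mem w hw =>
    obtain ⟨x, hx, rfl⟩ := hw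
    rw [coordHom_lamCls count hx, finsuppNatCast_apply]
    exact Int.natCast_nonneg _
  | zero => simp
  | add w w' _ _ h h' => simpa using add_nonneg h h'

variable {count}
  (hcount : ∀ a (ha : a ∈ gen n), (count.map a).lab = Finsupp.single ⟨a, ha⟩ 1)
include hcount

lemma coordHom_comp_genSum (hC : FreelyGeneratedBy C gen) :
    (coordHom count).comp (genSum C gen n) = AddMonoidHom.id _ := by
  refine Finsupp.addHom_ext' fun a => AddMonoidHom.ext_int ?_
  simp [genSum_single, coordHom_lamCls count (hC.1 n a.1 a.2), hcount]

lemma genSum_lab_map (hC : FreelyGeneratedBy C gen) {x : C.Cell} (hx : C.dim x = n) :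
    genSum C gen n (finsuppNatCast _ (count.map x).lab) = lamCls C n x := by
  refine congrArg EMCell.lab (hC.partFunc_ext (count.relabel ((genSum C gen n).comp
    (finsuppNatCast _))) (lamFunctor C n) (fun k hk a ha => ?_) x hx.le)
  have hda : C.dim a = k := hC.1 k a ha
  rcases hk.lt_or_eq with hk | rfl
  · exact EMCell.eq_of_dim_lt (count.map_dim a (by omega))
      (lt_of_eq_of_lt ((count.map_dim a (by omega)).trans hda) hk)
  · refine EMCell.ext (count.map_dim a hda.le) ?_
    show genSum C gen k (finsuppNatCast _ (count.map a).lab) = lamCls C k a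
    rw [hcount a ha, finsuppNatCast_single, genSum_single, Nat.cast_one, one_zsmul]

lemma genSum_comp_coordHom (hC : FreelyGeneratedBy C gen) :
    (genSum C gen n).comp (coordHom count) = AddMonoidHom.id _ :=
  lam_hom_ext fun x hx => by
    rw [AddMonoidHom.comp_apply, coordHom_lamCls count hx, genSum_lab_map hcount hC hx,
      AddMonoidHom.id_apply]

end Coordinates

/-- **Statement 14.** If `S` is a polygraph (with `C = S*` the free ω-category
it generates), then the augmented directed complex `λ(S*)` is free, with basis
the classes `[x]` of the generators of `S`: in each degree `n`, `λ(S*)_n` is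
isomorphic to the free abelian group `ℤ^(S_n)` on the `n`-generators, by an
isomorphism matching the canonical basis with the classes of the generators and
the nonnegative combinations `ℕ^(S_n)` with the submonoid `λ(S*)_n^*`. -/
theorem statement14 (C : OmegaCat.{u}) (gen : ℕ → Set C.Cell)
    (h : FreelyGeneratedBy C gen) (n : ℕ) :
    ∃ φ : ({a : C.Cell // a ∈ gen n} →₀ ℤ) ≃+ lam C n,
      IsCoord C gen n φ ∧ ∀ z, (∀ a, 0 ≤ z a) ↔ φ z ∈ lamPos C n := by
  obtain ⟨count, hcount⟩ := h.exists_counting n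
  have hinv := coordHom_comp_genSum hcount h
  refine ⟨(genSum C gen n).toAddEquiv (coordHom count) hinv (genSum_comp_coordHom hcount h),
    fun a => (genSum_single a 1).trans (one_zsmul _),
    fun z => ⟨genSum_mem_lamPos h, fun hz a => ?_⟩⟩
  simpa [← AddMonoidHom.comp_apply, hinv] using coordHom_nonneg count hz a

end Orientals

end
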